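/- arXiv:2511.03058 — 5 statements merged into one kernel-verified Lean document; each statement's English description precedes it below -/
import Mathlib

section
/- Let 𝓛 be the operator on integrable functions φ on 𝒱 = ℝ₊ × S^{d-1} defined by 𝓛φ(ṽ,v̂) = μ̂ ρ_φ φ̃(ṽ) q(v̂) + μ̃ ρ_φ φ̂(v̂) ψ(ṽ|v̂) − (μ̂+μ̃) φ(ṽ,v̂), where ρ_φ = ∫_𝒱 φ, ρ_φ φ̃(ṽ) = ∫_{S^{d-1}} φ(ṽ,v̂) dv̂, ρ_φ φ̂(v̂) = ∫_{ℝ₊} φ(ṽ,v̂) dṽ. Then the kernel of 𝓛 equals the span of T, where T(ṽ,v̂) = q(v̂)·(μ̂ ψ_q(ṽ) + μ̃ ψ(ṽ|v̂))/(μ̂+μ̃). That is, 𝓛φ = 0 if and only if φ = ρ_φ T. -/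
open MeasureTheory Set

noncomputable section

abbrev Sd (d : ℕ) : Type := ↥(Metric.sphere (0 : EuclideanSpace ℝ (Fin d)) 1)

/-- `ψ_q(ṽ) = ∫_{S^{d-1}} ψ(ṽ|v̂) q(v̂) dv̂`. -/
noncomputable def psiq {d : ℕ} (σ : Measure (Sd d)) (ψ : ℝ → Sd d → ℝ) (q : Sd d → ℝ)
    (v : ℝ) : ℝ :=
  ∫ ω, ψ v ω * q ω ∂σ

/-- `ψ_q^c(ṽ|v̂) = (μ̂ ψ_q(ṽ) + μ̃ ψ(ṽ|v̂))/(μ̂ + μ̃)`. -/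
noncomputable def psiqc {d : ℕ} (σ : Measure (Sd d)) (ψ : ℝ → Sd d → ℝ) (q : Sd d → ℝ)
    (μhat μtil : ℝ) (v : ℝ) (ω : Sd d) : ℝ :=
  (μhat * psiq σ ψ q v + μtil * ψ v ω) / (μhat + μtil)

/-- `T(ṽ,v̂) = q(v̂) ψ_q^c(ṽ|v̂)`. -/
noncomputable def Tker {d : ℕ} (σ : Measure (Sd d)) (ψ : ℝ → Sd d → ℝ) (q : Sd d → ℝ)
    (μhat μtil : ℝ) (v : ℝ) (ω : Sd d) : ℝ :=
  q ω * psiqc σ ψ q μhat μtil v ω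

/-- Total mass `ρ_φ = ∫_𝒱 φ` (iterated integral). -/
noncomputable def massOf {d : ℕ} (σ : Measure (Sd d)) (φ : ℝ → Sd d → ℝ) : ℝ :=
  ∫ v in Ioi (0:ℝ), (∫ ω, φ v ω ∂σ)

/-- Speed marginal `ρ_φ φ̃(ṽ) = ∫_{S^{d-1}} φ(ṽ,v̂) dv̂`. -/
noncomputable def margS {d : ℕ} (σ : Measure (Sd d)) (φ : ℝ → Sd d → ℝ) (v : ℝ) : ℝ :=
  ∫ ω, φ v ω ∂σ

/-- Direction marginal `ρ_φ φ̂(v̂) = ∫_{ℝ₊} φ(ṽ,v̂) dṽ`. -/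
noncomputable def margD {d : ℕ} (φ : ℝ → Sd d → ℝ) (ω : Sd d) : ℝ :=
  ∫ v in Ioi (0:ℝ), φ v ω

/-- The combined scattering operator
`𝓛φ = μ̂ ρ_φ φ̃ q + μ̃ ρ_φ φ̂ ψ − (μ̂+μ̃) φ`. -/
noncomputable def Lop {d : ℕ} (σ : Measure (Sd d)) (ψ : ℝ → Sd d → ℝ) (q : Sd d → ℝ)
    (μhat μtil : ℝ) (φ : ℝ → Sd d → ℝ) (v : ℝ) (ω : Sd d) : ℝ :=
  μhat * margS σ φ v * q ω + μtil * margD φ ω * ψ v ω - (μhat + μtil) * φ v ω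

/-- Marginal direction operator
`𝓛̂_q φ(v̂) = μ̂ ∫_{ℝ₊} ( q(v̂)∫_{S^{d-1}} φ(ṽ,v̂′)dv̂′ − φ(ṽ,v̂) ) dṽ`. -/
noncomputable def LhatQ {d : ℕ} (σ : Measure (Sd d)) (q : Sd d → ℝ) (μhat : ℝ)
    (φ : ℝ → Sd d → ℝ) (ω : Sd d) : ℝ :=
  μhat * ∫ v in Ioi (0:ℝ), (q ω * (∫ ω', φ v ω' ∂σ) - φ v ω)

/-- Marginal speed operator
`𝓛̃_ψ φ(ṽ) = μ̃ ∫_{S^{d-1}} ( ψ(ṽ|v̂)∫_{ℝ₊} φ(ṽ′,v̂)dṽ′ − φ(ṽ,v̂) ) dv̂`. -/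
noncomputable def LtilPsi {d : ℕ} (σ : Measure (Sd d)) (ψ : ℝ → Sd d → ℝ) (μtil : ℝ)
    (φ : ℝ → Sd d → ℝ) (v : ℝ) : ℝ :=
  μtil * ∫ ω, (ψ v ω * (∫ v' in Ioi (0:ℝ), φ v' ω) - φ v ω) ∂σ

/-- the kernel of the combined scattering operator `𝓛` is the span of
`T(ṽ,v̂) = q(v̂)(μ̂ψ_q(ṽ)+μ̃ψ(ṽ|v̂))/(μ̂+μ̃)`: `𝓛φ = 0` iff `φ = ρ_φ T`. -/
theorem stmt_2 {d : ℕ} (σ : Measure (Sd d)) [SFinite σ]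
    (ψ : ℝ → Sd d → ℝ) (q : Sd d → ℝ) (μhat μtil : ℝ)
    (hμhat : 0 < μhat) (hμtil : 0 < μtil)
    (hψnn : ∀ v ω, 0 ≤ ψ v ω) (hqnn : ∀ ω, 0 ≤ q ω)
    (hψint : ∀ ω, IntegrableOn (fun v => ψ v ω) (Ioi (0:ℝ)))
    (hqint : Integrable q σ)
    (hψnorm : ∀ ω, ∫ v in Ioi (0:ℝ), ψ v ω = 1)
    (hqnorm : ∫ ω, q ω ∂σ = 1)
    (hψqprod : ∀ v, Integrable (fun ω => ψ v ω * q ω) σ)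
    (hψqint : IntegrableOn (psiq σ ψ q) (Ioi (0:ℝ)))
    (hψqnorm : ∫ v in Ioi (0:ℝ), psiq σ ψ q v = 1)
    (φ : ℝ → Sd d → ℝ)
    (hφs1 : ∀ ω, IntegrableOn (fun v => φ v ω) (Ioi (0:ℝ)))
    (hφs2 : ∀ v, Integrable (fun ω => φ v ω) σ)
    (hφmargS : IntegrableOn (margS σ φ) (Ioi (0:ℝ))) :
    (∀ v ω, Lop σ ψ q μhat μtil φ v ω = 0) ↔
      (∀ v ω, φ v ω = massOf σ φ * Tker σ ψ q μhat μtil v ω) := by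
  have hsum : (0:ℝ) < μhat + μtil := by linarith
  have hne : μhat + μtil ≠ 0 := ne_of_gt hsum
  set c := massOf σ φ with hc
  have hceq : c = ∫ v in Ioi (0:ℝ), margS σ φ v := rfl
  have hDdef : ∀ ω, margD φ ω = ∫ v in Ioi (0:ℝ), φ v ω := fun _ => rfl
  have hSdef : ∀ v, margS σ φ v = ∫ ω, φ v ω ∂σ := fun _ => rfl
  constructor
  · intro h
    have hφ : ∀ v ω, φ v ω =
        (μhat * margS σ φ v * q ω + μtil * margD φ ω * ψ v ω) / (μhat + μtil) := by
      intro v ω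
      have h0 := h v ω
      unfold Lop at h0
      field_simp
      linarith [h0]
    have hD : ∀ ω, margD φ ω = c * q ω := by
      intro ω
      have key : (∫ v in Ioi (0:ℝ), φ v ω) = (μhat * q ω / (μhat + μtil)) * c
          + (μtil * margD φ ω / (μhat + μtil)) * 1 := by
        calc (∫ v in Ioi (0:ℝ), φ v ω)
            = ∫ v in Ioi (0:ℝ), ((μhat * q ω / (μhat + μtil)) * margS σ φ v
              + (μtil * margD φ ω / (μhat + μtil)) * ψ v ω) := by
              refine integral_congr_ae (Filter.Eventually.of_forall fun v => ?_)
              dsimp only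
              rw [hφ v ω]; field_simp
          _ = (μhat * q ω / (μhat + μtil)) * c
              + (μtil * margD φ ω / (μhat + μtil)) * 1 := by
              rw [integral_add (hφmargS.const_mul _) ((hψint ω).const_mul _),
                integral_const_mul, integral_const_mul, hψnorm ω, hceq]
      rw [← hDdef ω] at key
      have h1 : μhat * margD φ ω = μhat * (c * q ω) := by
        field_simp at key
        nlinarith [key]
      exact mul_left_cancel₀ (ne_of_gt hμhat) h1
    have hS : ∀ v, margS σ φ v = c * psiq σ ψ q v := by
      intro v
      have key : (∫ ω, φ v ω ∂σ) = (μhat * margS σ φ v / (μhat + μtil)) * 1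
          + (μtil * c / (μhat + μtil)) * psiq σ ψ q v := by
        calc (∫ ω, φ v ω ∂σ)
            = ∫ ω, ((μhat * margS σ φ v / (μhat + μtil)) * q ω
              + (μtil * c / (μhat + μtil)) * (ψ v ω * q ω)) ∂σ := by
              refine integral_congr_ae (Filter.Eventually.of_forall fun ω => ?_)
              dsimp only
              rw [hφ v ω, hD ω]; field_simp
          _ = _ := by
              rw [integral_add (hqint.const_mul _) ((hψqprod v).const_mul _),
                integral_const_mul, integral_const_mul, hqnorm]
              rfl
      rw [← hSdef v] at key
      have h1 : μtil * margS σ φ v = μtil * (c * psiq σ ψ q v) := by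
        field_simp at key
        nlinarith [key]
      exact mul_left_cancel₀ (ne_of_gt hμtil) h1
    intro v ω
    have e1 := hφ v ω
    rw [hS v, hD ω] at e1
    rw [e1]
    simp only [Tker, psiqc]
    field_simp
  · intro h
    have hS : ∀ v, margS σ φ v = c * psiq σ ψ q v := by
      intro v
      rw [hSdef v]
      calc (∫ ω, φ v ω ∂σ)
          = ∫ ω, ((c * μhat * psiq σ ψ q v / (μhat + μtil)) * q ω
            + (c * μtil / (μhat + μtil)) * (ψ v ω * q ω)) ∂σ := by
            refine integral_congr_ae (Filter.Eventually.of_forall fun ω => ?_)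
            dsimp only
            rw [h v ω]; simp only [Tker, psiqc]; field_simp
        _ = c * psiq σ ψ q v := by
            rw [integral_add (hqint.const_mul _) ((hψqprod v).const_mul _),
              integral_const_mul, integral_const_mul, hqnorm]
            show _ = c * psiq σ ψ q v
            simp only [psiq]
            field_simp
    have hD : ∀ ω, margD φ ω = c * q ω := by
      intro ω
      rw [hDdef ω]
      calc (∫ v in Ioi (0:ℝ), φ v ω)
          = ∫ v in Ioi (0:ℝ), ((c * μhat * q ω / (μhat + μtil)) * psiq σ ψ q v
            + (c * μtil * q ω / (μhat + μtil)) * ψ v ω) := by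
            refine integral_congr_ae (Filter.Eventually.of_forall fun v => ?_)
            dsimp only
            rw [h v ω]; simp only [Tker, psiqc]; field_simp
        _ = c * q ω := by
            rw [integral_add (hψqint.const_mul _) ((hψint ω).const_mul _),
              integral_const_mul, integral_const_mul, hψqnorm, hψnorm ω]
            field_simp
    intro v ω
    unfold Lop
    rw [hS v, hD ω, h v ω]
    simp only [Tker, psiqc]
    field_simp
    ring

end
end

section
/- With the notation of the combined scattering operator 𝓛 and the marginal operators 𝓛̂_q φ(v̂) = μ̂ ∫_{ℝ₊}( q(v̂)∫_{S^{d-1}} φ(ṽ,v̂′)dv̂′ − φ(ṽ,v̂)) dṽ and 𝓛̃_ψ φ(ṽ) = μ̃ ∫_{S^{d-1}}( ψ(ṽ|v̂)∫_{ℝ₊} φ(ṽ′,v̂)dṽ′ − φ(ṽ,v̂)) dv̂, it holds that ker(𝓛) ⊆ ker(𝓛̂_q) ∩ ker(𝓛̃_ψ); i.e., if 𝓛φ = 0 then 𝓛̂_q φ = 0 and 𝓛̃_ψ φ = 0. -/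
open MeasureTheory Set

noncomputable section

/-- `ker(𝓛) ⊆ ker(𝓛̂_q) ∩ ker(𝓛̃_ψ)`: if `𝓛φ = 0`
then `𝓛̂_q φ = 0` and `𝓛̃_ψ φ = 0`. -/
theorem stmt_3 {d : ℕ} (σ : Measure (Sd d)) [SFinite σ]
    (ψ : ℝ → Sd d → ℝ) (q : Sd d → ℝ) (μhat μtil : ℝ)
    (hμhat : 0 < μhat) (hμtil : 0 < μtil)
    (hψnn : ∀ v ω, 0 ≤ ψ v ω) (hqnn : ∀ ω, 0 ≤ q ω)
    (hψint : ∀ ω, IntegrableOn (fun v => ψ v ω) (Ioi (0:ℝ)))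
    (hqint : Integrable q σ)
    (hψnorm : ∀ ω, ∫ v in Ioi (0:ℝ), ψ v ω = 1)
    (hqnorm : ∫ ω, q ω ∂σ = 1)
    (hψqprod : ∀ v, Integrable (fun ω => ψ v ω * q ω) σ)
    (hψqint : IntegrableOn (psiq σ ψ q) (Ioi (0:ℝ)))
    (hψqnorm : ∫ v in Ioi (0:ℝ), psiq σ ψ q v = 1)
    (φ : ℝ → Sd d → ℝ)
    (hφs1 : ∀ ω, IntegrableOn (fun v => φ v ω) (Ioi (0:ℝ)))
    (hφs2 : ∀ v, Integrable (fun ω => φ v ω) σ)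
    (hφmargS : IntegrableOn (margS σ φ) (Ioi (0:ℝ)))
    (hker : ∀ v ω, Lop σ ψ q μhat μtil φ v ω = 0) :
    (∀ ω, LhatQ σ q μhat φ ω = 0) ∧ (∀ v, LtilPsi σ ψ μtil φ v = 0) := by
  have hs : μhat + μtil ≠ 0 := by positivity
  set ρ := massOf σ φ with hρdef
  -- pointwise representation of φ from the kernel equation
  have hφ : ∀ v ω, φ v ω =
      (μhat * margS σ φ v * q ω + μtil * margD φ ω * ψ v ω) / (μhat + μtil) := by
    intro v ω
    have h := hker v ω
    unfold Lop at h
    field_simp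
    linarith
  -- direction marginal is q ω * ρ
  have hD : ∀ ω, margD φ ω = q ω * ρ := by
    intro ω
    have h1 : margD φ ω = ∫ v in Ioi (0:ℝ),
        ((μhat * margS σ φ v) * q ω + (μtil * margD φ ω) * ψ v ω) / (μhat + μtil) := by
      refine setIntegral_congr_fun measurableSet_Ioi (fun v _ => ?_)
      exact hφ v ω
    rw [integral_div, integral_add (((hφmargS.const_mul μhat)).mul_const _)
      ((hψint ω).const_mul _), integral_mul_const, integral_const_mul,
      integral_const_mul, hψnorm ω] at h1
    have hρeq : (∫ v in Ioi (0:ℝ), margS σ φ v) = ρ := rfl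
    rw [hρeq] at h1
    have h2 : margD φ ω * (μhat + μtil) = μhat * ρ * q ω + μtil * margD φ ω * 1 := by
      field_simp at h1; linarith
    have h3 : μhat * margD φ ω = μhat * (q ω * ρ) := by ring_nf; ring_nf at h2; linarith
    exact mul_left_cancel₀ (ne_of_gt hμhat) h3
  -- speed marginal is ρ * psiq
  have hS : ∀ v, margS σ φ v = ρ * psiq σ ψ q v := by
    intro v
    have h1 : margS σ φ v = ∫ ω,
        ((μhat * margS σ φ v) * q ω + (μtil * ρ) * (ψ v ω * q ω)) / (μhat + μtil) ∂σ := by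
      refine integral_congr_ae (Filter.Eventually.of_forall (fun ω => ?_))
      rw [hφ v ω, hD ω]; ring
    rw [integral_div, integral_add (hqint.const_mul _) ((hψqprod v).const_mul _),
      integral_const_mul, integral_const_mul, hqnorm] at h1
    have hpsieq : (∫ ω, ψ v ω * q ω ∂σ) = psiq σ ψ q v := rfl
    rw [hpsieq] at h1
    have h2 : margS σ φ v * (μhat + μtil)
        = μhat * margS σ φ v * 1 + μtil * (ρ * psiq σ ψ q v) := by
      field_simp at h1; linarith
    have h3 : μtil * margS σ φ v = μtil * (ρ * psiq σ ψ q v) := by linarith [h2]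
    exact mul_left_cancel₀ (ne_of_gt hμtil) h3
  constructor
  · intro ω
    unfold LhatQ
    have h1 : (∫ v in Ioi (0:ℝ), (q ω * (∫ ω', φ v ω' ∂σ) - φ v ω))
        = ∫ v in Ioi (0:ℝ),
          (μtil * q ω / (μhat + μtil)) * (margS σ φ v - ρ * ψ v ω) := by
      refine setIntegral_congr_fun measurableSet_Ioi (fun v _ => ?_)
      have : (∫ ω', φ v ω' ∂σ) = margS σ φ v := rfl
      rw [this, hφ v ω, hD ω]
      field_simp
      ring
    rw [h1, integral_const_mul, integral_sub hφmargS ((hψint ω).const_mul ρ),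
      integral_const_mul, hψnorm ω]
    have hρeq : (∫ v in Ioi (0:ℝ), margS σ φ v) = ρ := rfl
    rw [hρeq]
    ring
  · intro v
    unfold LtilPsi
    have h1 : (∫ ω, (ψ v ω * (∫ v' in Ioi (0:ℝ), φ v' ω) - φ v ω) ∂σ)
        = ∫ ω, (μhat / (μhat + μtil)) * (ρ * (ψ v ω * q ω) - margS σ φ v * q ω) ∂σ := by
      refine integral_congr_ae (Filter.Eventually.of_forall (fun ω => ?_))
      dsimp only
      have : (∫ v' in Ioi (0:ℝ), φ v' ω) = margD φ ω := rfl
      rw [this, hφ v ω, hD ω]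
      field_simp
      ring
    rw [h1, integral_const_mul, integral_sub ((hψqprod v).const_mul ρ)
      (hqint.const_mul _), integral_const_mul, integral_const_mul, hqnorm]
    have hpsieq : (∫ ω, ψ v ω * q ω ∂σ) = psiq σ ψ q v := rfl
    rw [hpsieq, hS v]
    ring

end
end

section
/- For λ, η > 0, the function φ(ṽ,v̂) = ρ_φ · (λ q(v̂) ψ(ṽ|v̂) + η ψ_q(ṽ) q(v̂))/(λ+η) belongs to ker(𝓛̂_q) ∩ ker(𝓛̃_ψ) for all λ, η, but belongs to ker(𝓛) only if λ = μ̃ and η = μ̂ (up to common scaling, i.e., λ/η = μ̃/μ̂). In particular the inclusion ker(𝓛) ⊆ ker(𝓛̂_q) ∩ ker(𝓛̃_ψ) is in general strict. -/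
open MeasureTheory Set

noncomputable section

/-- The two-parameter family `φ_{λ,η} = ρ (λ qψ + η ψ_q q)/(λ+η)`. -/
noncomputable def phiLE {d : ℕ} (σ : Measure (Sd d)) (ψ : ℝ → Sd d → ℝ) (q : Sd d → ℝ)
    (ρ lam eta : ℝ) (v : ℝ) (ω : Sd d) : ℝ :=
  ρ * ((lam * (q ω * ψ v ω) + eta * (psiq σ ψ q v * q ω)) / (lam + eta))

/-!
Both marginals of `φ_{λ,η}` are those of `ρ q ψ` (namely `ρ ψ_q` and `ρ q`), whatever `λ, η`,
and the marginal operators `𝓛̂_q`, `𝓛̃_ψ` only see the marginals. The full operator `𝓛` sees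
`φ` itself: `𝓛 φ_{λ,η} = ρ (η μ̃ − λ μ̂)/(λ+η) · q (ψ − ψ_q)`, which vanishes identically only
when `λ μ̂ = η μ̃`.
-/

section

variable {d : ℕ} (σ : Measure (Sd d)) (ψ : ℝ → Sd d → ℝ) (q : Sd d → ℝ)

theorem LhatQ_eq_sub_margD {μhat : ℝ} {φ : ℝ → Sd d → ℝ} {ω : Sd d}
    (hS : IntegrableOn (margS σ φ) (Ioi 0)) (hD : IntegrableOn (fun v => φ v ω) (Ioi 0)) :
    LhatQ σ q μhat φ ω = μhat * (q ω * massOf σ φ - margD φ ω) := by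
  change μhat * ∫ v in Ioi 0, (q ω * margS σ φ v - φ v ω) = _
  rw [integral_sub (hS.const_mul (q ω)) hD, integral_const_mul]
  rfl

theorem LtilPsi_eq_sub_margS {μtil : ℝ} {φ : ℝ → Sd d → ℝ} {v : ℝ}
    (hD : Integrable (fun ω => ψ v ω * margD φ ω) σ) (hS : Integrable (φ v) σ) :
    LtilPsi σ ψ μtil φ v = μtil * (∫ ω, ψ v ω * margD φ ω ∂σ - margS σ φ v) :=
  congrArg (μtil * ·) (integral_sub hD hS)

variable {ρ lam eta : ℝ}

theorem phiLE_eq_add (hle : lam + eta ≠ 0) (v : ℝ) (ω : Sd d) :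
    phiLE σ ψ q ρ lam eta v ω =
      ρ * lam / (lam + eta) * (ψ v ω * q ω) + ρ * eta / (lam + eta) * psiq σ ψ q v * q ω := by
  rw [phiLE]
  field_simp

theorem integrable_phiLE (hle : lam + eta ≠ 0) {v : ℝ} (hqint : Integrable q σ)
    (hψq : Integrable (fun ω => ψ v ω * q ω) σ) :
    Integrable (phiLE σ ψ q ρ lam eta v) σ := by
  rw [funext (phiLE_eq_add σ ψ q hle v)]
  exact (hψq.const_mul _).add (hqint.const_mul _)

theorem integrableOn_phiLE (hle : lam + eta ≠ 0) {ω : Sd d}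
    (hψint : IntegrableOn (fun v => ψ v ω) (Ioi 0)) (hψqint : IntegrableOn (psiq σ ψ q) (Ioi 0)) :
    IntegrableOn (fun v => phiLE σ ψ q ρ lam eta v ω) (Ioi 0) := by
  simp only [phiLE_eq_add σ ψ q hle]
  exact ((hψint.mul_const _).const_mul _).add ((hψqint.const_mul _).mul_const _)

theorem margS_phiLE (hle : lam + eta ≠ 0) {v : ℝ} (hqint : Integrable q σ)
    (hqnorm : ∫ ω, q ω ∂σ = 1) (hψq : Integrable (fun ω => ψ v ω * q ω) σ) :
    margS σ (phiLE σ ψ q ρ lam eta) v = ρ * psiq σ ψ q v := by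
  simp only [margS, phiLE_eq_add σ ψ q hle, mul_assoc _ (psiq σ ψ q v)]
  rw [integral_add (hψq.const_mul _) ((hqint.const_mul _).const_mul _), integral_const_mul,
    integral_const_mul, integral_const_mul, hqnorm, ← psiq]
  field_simp

theorem margD_phiLE (hle : lam + eta ≠ 0) {ω : Sd d}
    (hψint : IntegrableOn (fun v => ψ v ω) (Ioi 0)) (hψnorm : ∫ v in Ioi 0, ψ v ω = 1)
    (hψqint : IntegrableOn (psiq σ ψ q) (Ioi 0)) (hψqnorm : ∫ v in Ioi 0, psiq σ ψ q v = 1) :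
    margD (phiLE σ ψ q ρ lam eta) ω = ρ * q ω := by
  simp only [margD, phiLE_eq_add σ ψ q hle, mul_comm (ψ _ ω), ← mul_assoc, mul_right_comm _ _ (q ω)]
  rw [integral_add (hψint.const_mul _) (hψqint.const_mul _), integral_const_mul,
    integral_const_mul, hψnorm, hψqnorm]
  field_simp

theorem Lop_phiLE {μhat μtil : ℝ} (hle : lam + eta ≠ 0) {v : ℝ} {ω : Sd d}
    (hS : margS σ (phiLE σ ψ q ρ lam eta) v = ρ * psiq σ ψ q v)
    (hD : margD (phiLE σ ψ q ρ lam eta) ω = ρ * q ω) :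
    Lop σ ψ q μhat μtil (phiLE σ ψ q ρ lam eta) v ω =
      ρ * (eta * μtil - lam * μhat) / (lam + eta) * (q ω * ψ v ω - q ω * psiq σ ψ q v) := by
  rw [Lop, hS, hD, phiLE]
  field_simp
  ring

end

theorem stmt_5_general {d : ℕ} (σ : Measure (Sd d))
    (ψ : ℝ → Sd d → ℝ) (q : Sd d → ℝ) (μhat μtil : ℝ)
    (hψint : ∀ ω, IntegrableOn (fun v => ψ v ω) (Ioi (0:ℝ)))
    (hqint : Integrable q σ)
    (hψnorm : ∀ ω, ∫ v in Ioi (0:ℝ), ψ v ω = 1)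
    (hqnorm : ∫ ω, q ω ∂σ = 1)
    (hψqprod : ∀ v, Integrable (fun ω => ψ v ω * q ω) σ)
    (hψqint : IntegrableOn (psiq σ ψ q) (Ioi (0:ℝ)))
    (hψqnorm : ∫ v in Ioi (0:ℝ), psiq σ ψ q v = 1)
    (ρ : ℝ) (hρ : ρ ≠ 0)
    (hneq : ∃ v ω, q ω * ψ v ω ≠ q ω * psiq σ ψ q v) :
    ∀ lam eta : ℝ, 0 < lam → 0 < eta →
      (∀ ω, LhatQ σ q μhat (phiLE σ ψ q ρ lam eta) ω = 0) ∧
      (∀ v, LtilPsi σ ψ μtil (phiLE σ ψ q ρ lam eta) v = 0) ∧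
      ((∀ v ω, Lop σ ψ q μhat μtil (phiLE σ ψ q ρ lam eta) v ω = 0) →
        lam * μhat = eta * μtil) := by
  intro lam eta hlam heta
  have hle : lam + eta ≠ 0 := by positivity
  have hS v := margS_phiLE σ ψ q (ρ := ρ) hle hqint hqnorm (hψqprod v)
  have hD ω := margD_phiLE σ ψ q (ρ := ρ) hle (hψint ω) (hψnorm ω) hψqint hψqnorm
  have hSint : IntegrableOn (margS σ (phiLE σ ψ q ρ lam eta)) (Ioi 0) := by
    rw [funext hS]
    exact hψqint.const_mul ρ
  have hmass : massOf σ (phiLE σ ψ q ρ lam eta) = ρ := by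
    change ∫ v in Ioi 0, margS σ (phiLE σ ψ q ρ lam eta) v = ρ
    rw [funext hS, integral_const_mul, hψqnorm, mul_one]
  refine ⟨fun ω => ?_, fun v => ?_, fun hL => ?_⟩
  · rw [LhatQ_eq_sub_margD σ q hSint (integrableOn_phiLE σ ψ q hle (hψint ω) hψqint), hmass, hD]
    ring
  · have hψD : Integrable (fun ω => ψ v ω * margD (phiLE σ ψ q ρ lam eta) ω) σ := by
      simpa only [hD, mul_left_comm (ψ v _)] using (hψqprod v).const_mul ρ
    rw [LtilPsi_eq_sub_margS σ ψ hψD (integrable_phiLE σ ψ q hle hqint (hψqprod v)), hS]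
    simp only [hD, mul_left_comm (ψ v _), integral_const_mul]
    rw [← psiq, sub_self, mul_zero]
  · obtain ⟨v, ω, hdep⟩ := hneq
    have h := hL v ω
    rw [Lop_phiLE σ ψ q hle (hS v) (hD ω)] at h
    simp only [mul_eq_zero, div_eq_zero_iff, hρ, hle, sub_eq_zero, hdep, false_or, or_false] at h
    linarith

/-- for all `λ, η > 0` the function
`φ = ρ(λ q ψ + η ψ_q q)/(λ+η)` belongs to `ker(𝓛̂_q) ∩ ker(𝓛̃_ψ)`, but (provided `ψ`
genuinely depends on the direction, i.e. `qψ ≠ qψ_q`, and `ρ ≠ 0`) it belongs to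
`ker(𝓛)` only if `λ μ̂ = η μ̃` (i.e. `λ/η = μ̃/μ̂`).  In particular the inclusion
`ker(𝓛) ⊆ ker(𝓛̂_q) ∩ ker(𝓛̃_ψ)` is in general strict. -/
theorem stmt_5 {d : ℕ} (σ : Measure (Sd d)) [SFinite σ]
    (ψ : ℝ → Sd d → ℝ) (q : Sd d → ℝ) (μhat μtil : ℝ)
    (hμhat : 0 < μhat) (hμtil : 0 < μtil)
    (hψnn : ∀ v ω, 0 ≤ ψ v ω) (hqnn : ∀ ω, 0 ≤ q ω)
    (hψint : ∀ ω, IntegrableOn (fun v => ψ v ω) (Ioi (0:ℝ)))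
    (hqint : Integrable q σ)
    (hψnorm : ∀ ω, ∫ v in Ioi (0:ℝ), ψ v ω = 1)
    (hqnorm : ∫ ω, q ω ∂σ = 1)
    (hψqprod : ∀ v, Integrable (fun ω => ψ v ω * q ω) σ)
    (hψqint : IntegrableOn (psiq σ ψ q) (Ioi (0:ℝ)))
    (hψqnorm : ∫ v in Ioi (0:ℝ), psiq σ ψ q v = 1)
    (ρ : ℝ) (hρ : ρ ≠ 0)
    (hneq : ∃ v ω, q ω * ψ v ω ≠ q ω * psiq σ ψ q v) :
    ∀ lam eta : ℝ, 0 < lam → 0 < eta →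
      (∀ ω, LhatQ σ q μhat (phiLE σ ψ q ρ lam eta) ω = 0) ∧
      (∀ v, LtilPsi σ ψ μtil (phiLE σ ψ q ρ lam eta) v = 0) ∧
      ((∀ v ω, Lop σ ψ q μhat μtil (phiLE σ ψ q ρ lam eta) v ω = 0) →
        lam * μhat = eta * μtil) :=
  stmt_5_general σ ψ q μhat μtil hψint hqint hψnorm hqnorm hψqprod hψqint hψqnorm ρ hρ hneq

end
end

section
/- Under the assumptions ∫_{ℝ₊}ψ(·|v̂)=1, ∫_{S^{d-1}}q=1, ψ,q ≥ 0 integrable, and ψ_q^c/ψ_q ∈ L^∞, the operator 𝓛f = μ̂(ρf̃ q − f) + μ̃(ρf̂ ψ − f) is bounded on L²_T(𝒱): there exists a finite constant C > 0, depending only on μ̂, μ̃, and ‖ψ_q^c/ψ_q‖_{L^∞}, such that ‖𝓛f‖²_{L²_T} ≤ C‖f‖²_{L²_T} for all f ∈ L²_T(𝒱). -/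
open MeasureTheory Set

noncomputable section

/-- The measure on the phase space `𝒱 = ℝ₊ × S^{d-1}`. -/
noncomputable def Vprod {d : ℕ} (σ : Measure (Sd d)) : Measure (ℝ × Sd d) :=
  (volume.restrict (Ioi (0:ℝ))).prod σ

/-! Expanding `𝓛f = μ̂ρf̃ q + μ̃ρf̂ ψ − (μ̂+μ̃)f` and using `(a+b+c)² ≤ 3(a²+b²+c²)`, it suffices to
bound each term separately in `L²_T`. Since `(μ̂+μ̃)ψ_q^c` dominates both `μ̂ψ_q` and `μ̃ψ`, the first
two terms divided by `T` are at most multiples of `(ρf̃)²/ψ_q · q` and `(ρf̂)²/q · ψ`. Weighted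
Cauchy–Schwarz against `T`, whose direction integral is `ψ_q` and whose speed integral is a constant
multiple of `q`, bounds `∫(ρf̃)²/ψ_q` and `∫(ρf̂)²/q` by multiples of `‖f‖²_{L²_T}`.
As `ψ` is not assumed jointly measurable, the final integration goes through lower Lebesgue
integrals, for which Tonelli's inequality needs no measurability. -/

section General

variable {α β : Type*} [MeasurableSpace α] [MeasurableSpace β]

theorem sq_integral_le_integral_mul_integral_sq_div {μ : Measure α} {g t : α → ℝ}
    (ht : ∀ᵐ x ∂μ, 0 < t x) (hg : Integrable g μ) (ht_int : Integrable t μ)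
    (hgt : Integrable (fun x => g x ^ 2 / t x) μ) :
    (∫ x, g x ∂μ) ^ 2 ≤ (∫ x, t x ∂μ) * ∫ x, g x ^ 2 / t x ∂μ := by
  -- `∫ (g - s t)² / t ≥ 0` is a quadratic in `s` with non-positive discriminant
  have hquad : ∀ s : ℝ, 0 ≤ (∫ x, t x ∂μ) * (s * s) + (-2 * ∫ x, g x ∂μ) * s
      + ∫ x, g x ^ 2 / t x ∂μ := by
    intro s
    have hsplit : ∫ x, (t x * (s * s) + -2 * g x * s + g x ^ 2 / t x) ∂μ
        = (∫ x, t x ∂μ) * (s * s) + (-2 * ∫ x, g x ∂μ) * s + ∫ x, g x ^ 2 / t x ∂μ := by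
      have hlin : Integrable (fun x => t x * (s * s) + -2 * g x * s) μ :=
        (ht_int.mul_const _).add ((hg.const_mul _).mul_const _)
      rw [integral_add hlin hgt, integral_add (ht_int.mul_const _) ((hg.const_mul _).mul_const _),
        integral_mul_const, integral_mul_const, integral_const_mul]
    rw [← hsplit]
    refine integral_nonneg_of_ae (ht.mono fun x hx => ?_)
    have hsq : t x * (s * s) + -2 * g x * s + g x ^ 2 / t x = (g x - s * t x) ^ 2 / t x := by
      field_simp; ring
    dsimp only [Pi.zero_apply]
    rw [hsq]; positivity
  have := discrim_le_zero hquad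
  rw [discrim] at this
  linarith

theorem sq_integral_div_le_of_integral_eq {μ : Measure α} {g t : α → ℝ} {a c : ℝ}
    (ht : ∀ᵐ x ∂μ, 0 < t x) (hg : Integrable g μ) (ht_int : Integrable t μ)
    (hgt : Integrable (fun x => g x ^ 2 / t x) μ) (ha : 0 < a)
    (ht_eq : ∫ x, t x ∂μ = c * a) :
    (∫ x, g x ∂μ) ^ 2 / a ≤ c * ∫ x, g x ^ 2 / t x ∂μ := by
  rw [div_le_iff₀ ha]
  calc (∫ x, g x ∂μ) ^ 2 ≤ (∫ x, t x ∂μ) * ∫ x, g x ^ 2 / t x ∂μ :=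
        sq_integral_le_integral_mul_integral_sq_div ht hg ht_int hgt
    _ = c * (∫ x, g x ^ 2 / t x ∂μ) * a := by rw [ht_eq]; ring

theorem integral_prod_le_integral_integral_of_norm_le {ν : Measure α} {σ : Measure β}
    [SFinite ν] [SFinite σ] {H : α × β → ℝ} {G : α → β → ℝ}
    (hHG : ∀ᵐ p ∂ν.prod σ, ‖H p‖ ≤ G p.1 p.2) (hG : ∀ x y, 0 ≤ G x y)
    (hG_int : ∀ᵐ y ∂σ, Integrable (fun x => G x y) ν)
    (hG_int' : Integrable (fun y => ∫ x, G x y ∂ν) σ) :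
    ∫ p, H p ∂ν.prod σ ≤ ∫ y, ∫ x, G x y ∂ν ∂σ := by
  have hG_int_nonneg : 0 ≤ ∫ y, ∫ x, G x y ∂ν ∂σ :=
    integral_nonneg fun y => integral_nonneg fun x => hG x y
  refine (le_abs_self _).trans ((norm_integral_le_lintegral_norm H).trans
    (ENNReal.toReal_le_of_le_ofReal hG_int_nonneg ?_))
  -- Tonelli's inequality `∫⁻ ≤ ∫⁻∫⁻` needs no measurability of `G`
  calc ∫⁻ p, ENNReal.ofReal ‖H p‖ ∂ν.prod σ
      ≤ ∫⁻ p, ENNReal.ofReal (G p.1 p.2) ∂ν.prod σ :=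
        lintegral_mono_ae (hHG.mono fun p hp => ENNReal.ofReal_le_ofReal hp)
    _ = ∫⁻ p, ENNReal.ofReal (G p.2 p.1) ∂σ.prod ν :=
        (lintegral_prod_swap (fun p : α × β => ENNReal.ofReal (G p.1 p.2))).symm
    _ ≤ ∫⁻ y, ∫⁻ x, ENNReal.ofReal (G x y) ∂ν ∂σ := lintegral_prod_le _
    _ = ∫⁻ y, ENNReal.ofReal (∫ x, G x y ∂ν) ∂σ := by
        refine lintegral_congr_ae (hG_int.mono fun y hy => ?_)
        exact (ofReal_integral_eq_lintegral_ofReal hy (.of_forall fun x => hG x y)).symm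
    _ = ENNReal.ofReal (∫ y, ∫ x, G x y ∂ν ∂σ) :=
        (ofReal_integral_eq_lintegral_ofReal hG_int'
          (.of_forall fun y => integral_nonneg fun x => hG x y)).symm

end General

theorem sq_add_sub_div_le {μh μt s c y ψ F₁ F₂ f : ℝ} (hμh : 0 < μh) (hμt : 0 ≤ μt)
    (hs : 0 < s) (hy : 0 < y) (hψ : 0 ≤ ψ) (hc : (μh + μt) * c = μh * s + μt * ψ) :
    (μh * (F₁ * y - f) + μt * (F₂ * ψ - f)) ^ 2 / (y * c)
      ≤ 3 * (μh + μt) * (μh * (F₁ ^ 2 / s * y) + μt * (F₂ ^ 2 / y * ψ)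
          + (μh + μt) * (f ^ 2 / (y * c))) := by
  have hc_pos : 0 < c := by nlinarith
  have hyc : 0 < y * c := mul_pos hy hc_pos
  have h₁ : (μh * (F₁ * y)) ^ 2 / (y * c) ≤ (μh + μt) * (μh * (F₁ ^ 2 / s * y)) := by
    rw [div_le_iff₀ hyc]
    have : (μh + μt) * (μh * (F₁ ^ 2 / s * y)) * (y * c)
        = μh * (F₁ ^ 2 / s) * y ^ 2 * (μh * s + μt * ψ) := by rw [← hc]; ring
    rw [this, mul_add, show μh * (F₁ ^ 2 / s) * y ^ 2 * (μh * s) = (μh * (F₁ * y)) ^ 2 by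
      field_simp]
    have : 0 ≤ μh * (F₁ ^ 2 / s) * y ^ 2 * (μt * ψ) := by positivity
    linarith
  have h₂ : (μt * (F₂ * ψ)) ^ 2 / (y * c) ≤ (μh + μt) * (μt * (F₂ ^ 2 / y * ψ)) := by
    rw [div_le_iff₀ hyc]
    have : (μh + μt) * (μt * (F₂ ^ 2 / y * ψ)) * (y * c)
        = μt * F₂ ^ 2 * ψ * (μh * s + μt * ψ) := by rw [← hc]; field_simp
    rw [this]
    have : 0 ≤ μt * F₂ ^ 2 * ψ * (μh * s) := by positivity
    nlinarith
  have h₃ : (μh * (F₁ * y - f) + μt * (F₂ * ψ - f)) ^ 2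
      ≤ 3 * ((μh * (F₁ * y)) ^ 2 + (μt * (F₂ * ψ)) ^ 2 + ((μh + μt) * f) ^ 2) := by
    nlinarith [sq_nonneg (μh * (F₁ * y) - μt * (F₂ * ψ)),
      sq_nonneg (μh * (F₁ * y) + (μh + μt) * f), sq_nonneg (μt * (F₂ * ψ) + (μh + μt) * f)]
  calc _ ≤ 3 * ((μh * (F₁ * y)) ^ 2 + (μt * (F₂ * ψ)) ^ 2 + ((μh + μt) * f) ^ 2) / (y * c) :=
        div_le_div_of_nonneg_right h₃ hyc.le
    _ = 3 * ((μh * (F₁ * y)) ^ 2 / (y * c) + (μt * (F₂ * ψ)) ^ 2 / (y * c)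
          + (μh + μt) * ((μh + μt) * (f ^ 2 / (y * c)))) := by ring
    _ ≤ _ := by nlinarith

section Scattering

variable {d : ℕ} {σ : Measure (Sd d)} {ψ : ℝ → Sd d → ℝ} {q : Sd d → ℝ} {μhat μtil : ℝ}

/-- `∫_{ℝ₊} ψ_q^c(ṽ|v̂) dṽ`, which does not depend on `v̂` because `∫_{ℝ₊} ψ(·|v̂) = 1`. -/
def psiqcSpeedMass (σ : Measure (Sd d)) (ψ : ℝ → Sd d → ℝ) (q : Sd d → ℝ) (μhat μtil : ℝ) : ℝ :=
  (μhat * (∫ v in Ioi (0:ℝ), psiq σ ψ q v) + μtil) / (μhat + μtil)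

theorem psiq_nonneg (hψ : ∀ v ω, 0 ≤ ψ v ω) (hq : ∀ ω, 0 ≤ q ω) (v : ℝ) :
    0 ≤ psiq σ ψ q v :=
  integral_nonneg fun ω => mul_nonneg (hψ v ω) (hq ω)

theorem Tker_nonneg (hμhat : 0 ≤ μhat) (hμtil : 0 ≤ μtil) (hψ : ∀ v ω, 0 ≤ ψ v ω)
    (hq : ∀ ω, 0 ≤ q ω) (v : ℝ) (ω : Sd d) : 0 ≤ Tker σ ψ q μhat μtil v ω :=
  mul_nonneg (hq ω) <| div_nonneg
    (add_nonneg (mul_nonneg hμhat (psiq_nonneg hψ hq v)) (mul_nonneg hμtil (hψ v ω)))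
    (add_nonneg hμhat hμtil)

theorem Tker_pos (hμhat : 0 < μhat) (hμtil : 0 ≤ μtil) (hψ : ∀ v ω, 0 ≤ ψ v ω)
    {v : ℝ} {ω : Sd d} (hq : 0 < q ω) (hψq : 0 < psiq σ ψ q v) :
    0 < Tker σ ψ q μhat μtil v ω :=
  mul_pos hq <| div_pos (add_pos_of_pos_of_nonneg (mul_pos hμhat hψq)
    (mul_nonneg hμtil (hψ v ω))) (add_pos_of_pos_of_nonneg hμhat hμtil)

theorem Tker_eq_mul_q_add (v : ℝ) (ω : Sd d) :
    Tker σ ψ q μhat μtil v ω = μhat / (μhat + μtil) * psiq σ ψ q v * q ω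
      + μtil / (μhat + μtil) * (ψ v ω * q ω) := by
  simp only [Tker, psiqc]; ring

theorem integrable_Tker_sphere (hq : Integrable q σ) {v : ℝ}
    (hψq : Integrable (fun ω => ψ v ω * q ω) σ) :
    Integrable (fun ω => Tker σ ψ q μhat μtil v ω) σ := by
  simp only [Tker_eq_mul_q_add]
  exact (hq.const_mul _).add (hψq.const_mul _)

theorem integral_Tker_sphere (hμ : μhat + μtil ≠ 0) (hq : Integrable q σ)
    (hq_norm : ∫ ω, q ω ∂σ = 1) {v : ℝ} (hψq : Integrable (fun ω => ψ v ω * q ω) σ) :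
    ∫ ω, Tker σ ψ q μhat μtil v ω ∂σ = psiq σ ψ q v := by
  simp only [Tker_eq_mul_q_add]
  rw [integral_add (hq.const_mul _) (hψq.const_mul _), integral_const_mul, integral_const_mul,
    hq_norm, ← psiq]
  field_simp

theorem integrableOn_Tker_speed (hψq : IntegrableOn (psiq σ ψ q) (Ioi 0)) {ω : Sd d}
    (hψ : IntegrableOn (fun v => ψ v ω) (Ioi 0)) :
    IntegrableOn (fun v => Tker σ ψ q μhat μtil v ω) (Ioi 0) := by
  simp only [Tker_eq_mul_q_add]
  exact ((hψq.const_mul _).mul_const _).add ((hψ.mul_const _).const_mul _)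

theorem integral_Tker_speed (hμ : μhat + μtil ≠ 0) (hψq : IntegrableOn (psiq σ ψ q) (Ioi 0))
    {ω : Sd d} (hψ : IntegrableOn (fun v => ψ v ω) (Ioi 0))
    (hψ_norm : ∫ v in Ioi (0:ℝ), ψ v ω = 1) :
    ∫ v in Ioi (0:ℝ), Tker σ ψ q μhat μtil v ω = psiqcSpeedMass σ ψ q μhat μtil * q ω := by
  simp only [Tker_eq_mul_q_add]
  rw [integral_add ((hψq.const_mul _).mul_const _) ((hψ.mul_const _).const_mul _),
    integral_mul_const, integral_const_mul, integral_const_mul, integral_mul_const, hψ_norm,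
    psiqcSpeedMass]
  field_simp

end Scattering

section Bound

variable {d : ℕ} {σ : Measure (Sd d)} [SFinite σ] {ψ : ℝ → Sd d → ℝ} {q : Sd d → ℝ}
  {μhat μtil : ℝ}

theorem integral_sq_integral_sphere_div_psiq_le (hμhat : 0 < μhat) (hμtil : 0 < μtil)
    (hψ : ∀ v ω, 0 ≤ ψ v ω) (hq_pos : ∀ ω, 0 < q ω) (hq : Integrable q σ)
    (hq_norm : ∫ ω, q ω ∂σ = 1) (hψq_pos : ∀ v ∈ Ioi (0:ℝ), 0 < psiq σ ψ q v)
    (hψq : ∀ v, Integrable (fun ω => ψ v ω * q ω) σ) {f : ℝ × Sd d → ℝ}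
    (hf : ∀ v, Integrable (fun ω => f (v, ω)) σ)
    (hfT : Integrable (fun p => f p ^ 2 / Tker σ ψ q μhat μtil p.1 p.2) (Vprod σ)) :
    ∫ v in Ioi (0:ℝ), (∫ ω, f (v, ω) ∂σ) ^ 2 / psiq σ ψ q v
      ≤ ∫ p, f p ^ 2 / Tker σ ψ q μhat μtil p.1 p.2 ∂(Vprod σ) := by
  rw [Vprod] at hfT ⊢
  rw [integral_prod _ hfT]
  refine integral_mono_of_nonneg (ae_restrict_of_forall_mem measurableSet_Ioi fun v hv =>
    div_nonneg (sq_nonneg _) (hψq_pos v hv).le) hfT.integral_prod_left ?_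
  filter_upwards [hfT.prod_right_ae, ae_restrict_mem measurableSet_Ioi] with v hfT_v hv
  simpa using sq_integral_div_le_of_integral_eq (c := 1)
    (.of_forall fun ω => Tker_pos hμhat hμtil.le hψ (hq_pos ω) (hψq_pos v hv)) (hf v)
    (integrable_Tker_sphere hq (hψq v)) hfT_v (hψq_pos v hv)
    (by rw [integral_Tker_sphere (by positivity) hq hq_norm (hψq v), one_mul])

theorem integral_sq_integral_speed_div_q_le (hμhat : 0 < μhat) (hμtil : 0 < μtil)
    (hψ : ∀ v ω, 0 ≤ ψ v ω) (hq_pos : ∀ ω, 0 < q ω)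
    (hψ_int : ∀ ω, IntegrableOn (fun v => ψ v ω) (Ioi (0:ℝ)))
    (hψ_norm : ∀ ω, ∫ v in Ioi (0:ℝ), ψ v ω = 1) (hψq_pos : ∀ v ∈ Ioi (0:ℝ), 0 < psiq σ ψ q v)
    (hψq_int : IntegrableOn (psiq σ ψ q) (Ioi (0:ℝ))) {f : ℝ × Sd d → ℝ}
    (hf : ∀ ω, IntegrableOn (fun v => f (v, ω)) (Ioi (0:ℝ)))
    (hfT : Integrable (fun p => f p ^ 2 / Tker σ ψ q μhat μtil p.1 p.2) (Vprod σ)) :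
    ∫ ω, (∫ v in Ioi (0:ℝ), f (v, ω)) ^ 2 / q ω ∂σ
      ≤ psiqcSpeedMass σ ψ q μhat μtil * ∫ p, f p ^ 2 / Tker σ ψ q μhat μtil p.1 p.2 ∂(Vprod σ) := by
  rw [Vprod] at hfT ⊢
  rw [integral_prod_symm _ hfT, ← integral_const_mul]
  refine integral_mono_of_nonneg (.of_forall fun ω => div_nonneg (sq_nonneg _) (hq_pos ω).le)
    (hfT.integral_prod_right.const_mul _) ?_
  filter_upwards [hfT.prod_left_ae] with ω hfT_ω
  exact sq_integral_div_le_of_integral_eq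
    (ae_restrict_of_forall_mem measurableSet_Ioi fun v hv =>
      Tker_pos hμhat hμtil.le hψ (hq_pos ω) (hψq_pos v hv)) (hf ω)
    (integrableOn_Tker_speed hψq_int (hψ_int ω)) hfT_ω (hq_pos ω)
    (integral_Tker_speed (by positivity) hψq_int (hψ_int ω) (hψ_norm ω))

end Bound

section Main

variable {d : ℕ} {σ : Measure (Sd d)} {ψ : ℝ → Sd d → ℝ} {q : Sd d → ℝ} {μhat μtil : ℝ}

def scatterBound (σ : Measure (Sd d)) (ψ : ℝ → Sd d → ℝ) (q : Sd d → ℝ) (μhat μtil : ℝ)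
    (f : ℝ × Sd d → ℝ) (v : ℝ) (ω : Sd d) : ℝ :=
  3 * (μhat + μtil) * (μhat * ((∫ ω', f (v, ω') ∂σ) ^ 2 / psiq σ ψ q v * q ω)
    + μtil * ((∫ v' in Ioi (0:ℝ), f (v', ω)) ^ 2 / q ω * ψ v ω)
    + (μhat + μtil) * (f (v, ω) ^ 2 / Tker σ ψ q μhat μtil v ω))

theorem scatterBound_nonneg (hμhat : 0 < μhat) (hμtil : 0 < μtil) (hψ : ∀ v ω, 0 ≤ ψ v ω)
    (hq : ∀ ω, 0 < q ω) (f : ℝ × Sd d → ℝ) (v : ℝ) (ω : Sd d) :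
    0 ≤ scatterBound σ ψ q μhat μtil f v ω := by
  have := psiq_nonneg (σ := σ) hψ (fun ω => (hq ω).le) v
  have := Tker_nonneg (σ := σ) hμhat.le hμtil.le hψ (fun ω => (hq ω).le) v ω
  have := hq ω
  have := hψ v ω
  unfold scatterBound
  positivity

theorem ae_norm_sq_scatter_div_Tker_le [SFinite σ] (hμhat : 0 < μhat) (hμtil : 0 < μtil)
    (hψ : ∀ v ω, 0 ≤ ψ v ω) (hq : ∀ ω, 0 < q ω) (hψq_pos : ∀ v ∈ Ioi (0:ℝ), 0 < psiq σ ψ q v)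
    (f : ℝ × Sd d → ℝ) :
    ∀ᵐ p ∂Vprod σ, ‖(μhat * ((∫ ω, f (p.1, ω) ∂σ) * q p.2 - f p)
          + μtil * ((∫ v in Ioi (0:ℝ), f (v, p.2)) * ψ p.1 p.2 - f p)) ^ 2
          / Tker σ ψ q μhat μtil p.1 p.2‖ ≤ scatterBound σ ψ q μhat μtil f p.1 p.2 := by
  filter_upwards [Measure.quasiMeasurePreserving_fst.ae (ae_restrict_mem measurableSet_Ioi)]
    with p hp
  rw [Real.norm_of_nonneg (div_nonneg (sq_nonneg _)
    (Tker_nonneg hμhat.le hμtil.le hψ (fun ω => (hq ω).le) _ _))]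
  exact sq_add_sub_div_le hμhat hμtil.le (hψq_pos _ hp) (hq p.2) (hψ p.1 p.2)
    (by simp only [psiqc]; field_simp)

theorem integral_scatterBound_speed (hψ_int : ∀ ω, IntegrableOn (fun v => ψ v ω) (Ioi (0:ℝ)))
    (hψ_norm : ∀ ω, ∫ v in Ioi (0:ℝ), ψ v ω = 1) {f : ℝ × Sd d → ℝ}
    (hf_sphere_sq : IntegrableOn (fun v => (∫ ω, f (v, ω) ∂σ) ^ 2 / psiq σ ψ q v) (Ioi (0:ℝ)))
    {ω : Sd d}
    (hfT : IntegrableOn (fun v => f (v, ω) ^ 2 / Tker σ ψ q μhat μtil v ω) (Ioi (0:ℝ))) :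
    IntegrableOn (fun v => scatterBound σ ψ q μhat μtil f v ω) (Ioi (0:ℝ)) ∧
      ∫ v in Ioi (0:ℝ), scatterBound σ ψ q μhat μtil f v ω
        = 3 * (μhat + μtil) *
          (μhat * ((∫ v in Ioi (0:ℝ), (∫ ω', f (v, ω') ∂σ) ^ 2 / psiq σ ψ q v) * q ω)
          + μtil * ((∫ v in Ioi (0:ℝ), f (v, ω)) ^ 2 / q ω)
          + (μhat + μtil) * ∫ v in Ioi (0:ℝ), f (v, ω) ^ 2 / Tker σ ψ q μhat μtil v ω) := by
  have h₁ := (hf_sphere_sq.mul_const (q ω)).const_mul μhat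
  have h₂ := ((hψ_int ω).const_mul ((∫ v in Ioi (0:ℝ), f (v, ω)) ^ 2 / q ω)).const_mul μtil
  have h₁₂ : IntegrableOn (fun v => μhat * ((∫ ω', f (v, ω') ∂σ) ^ 2 / psiq σ ψ q v * q ω)
      + μtil * ((∫ v' in Ioi (0:ℝ), f (v', ω)) ^ 2 / q ω * ψ v ω)) (Ioi (0:ℝ)) := h₁.add h₂
  refine ⟨(h₁₂.add (hfT.const_mul _)).const_mul _, ?_⟩
  simp only [scatterBound]
  rw [integral_const_mul, integral_add h₁₂ (hfT.const_mul _), integral_add h₁ h₂,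
    integral_const_mul, integral_const_mul, integral_const_mul, integral_mul_const,
    integral_const_mul, hψ_norm ω, mul_one]

theorem psiqcSpeedMass_nonneg (hμhat : 0 < μhat) (hμtil : 0 < μtil) (hψ : ∀ v ω, 0 ≤ ψ v ω)
    (hq : ∀ ω, 0 ≤ q ω) : 0 ≤ psiqcSpeedMass σ ψ q μhat μtil :=
  div_nonneg (add_nonneg (mul_nonneg hμhat.le
    (setIntegral_nonneg measurableSet_Ioi fun v _ => psiq_nonneg hψ hq v)) hμtil.le)
    (add_pos hμhat hμtil).le

theorem integral_sq_scatter_div_Tker_le [SFinite σ] (hμhat : 0 < μhat) (hμtil : 0 < μtil)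
    (hψ : ∀ v ω, 0 ≤ ψ v ω) (hq_pos : ∀ ω, 0 < q ω)
    (hψ_int : ∀ ω, IntegrableOn (fun v => ψ v ω) (Ioi (0:ℝ))) (hq : Integrable q σ)
    (hψ_norm : ∀ ω, ∫ v in Ioi (0:ℝ), ψ v ω = 1) (hq_norm : ∫ ω, q ω ∂σ = 1)
    (hψq_pos : ∀ v ∈ Ioi (0:ℝ), 0 < psiq σ ψ q v)
    (hψq_int : IntegrableOn (psiq σ ψ q) (Ioi (0:ℝ)))
    (hψq : ∀ v, Integrable (fun ω => ψ v ω * q ω) σ) {f : ℝ × Sd d → ℝ}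
    (hfT : Integrable (fun p => f p ^ 2 / Tker σ ψ q μhat μtil p.1 p.2) (Vprod σ))
    (hf_speed : ∀ ω, IntegrableOn (fun v => f (v, ω)) (Ioi (0:ℝ)))
    (hf_sphere : ∀ v, Integrable (fun ω => f (v, ω)) σ)
    (hf_speed_sq : Integrable (fun ω => (∫ v in Ioi (0:ℝ), f (v, ω)) ^ 2 / q ω) σ)
    (hf_sphere_sq : IntegrableOn (fun v => (∫ ω, f (v, ω) ∂σ) ^ 2 / psiq σ ψ q v) (Ioi (0:ℝ))) :
    ∫ p, (μhat * ((∫ ω, f (p.1, ω) ∂σ) * q p.2 - f p)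
          + μtil * ((∫ v in Ioi (0:ℝ), f (v, p.2)) * ψ p.1 p.2 - f p)) ^ 2
          / Tker σ ψ q μhat μtil p.1 p.2 ∂(Vprod σ)
      ≤ 3 * (μhat + μtil) * (2 * μhat + μtil + μtil * psiqcSpeedMass σ ψ q μhat μtil)
          * ∫ p, (f p) ^ 2 / Tker σ ψ q μhat μtil p.1 p.2 ∂(Vprod σ) := by
  have hU := integral_sq_integral_sphere_div_psiq_le hμhat hμtil hψ hq_pos hq hq_norm hψq_pos
    hψq hf_sphere hfT
  have hW := integral_sq_integral_speed_div_q_le hμhat hμtil hψ hq_pos hψ_int hψ_norm hψq_pos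
    hψq_int hf_speed hfT
  set R := ∫ p, (f p) ^ 2 / Tker σ ψ q μhat μtil p.1 p.2 ∂(Vprod σ)
  rw [Vprod] at hfT
  have hR : ∫ ω, (∫ v in Ioi (0:ℝ), f (v, ω) ^ 2 / Tker σ ψ q μhat μtil v ω) ∂σ = R :=
    (integral_prod_symm _ hfT).symm
  have hG := hfT.prod_left_ae.mono fun ω hfT_ω =>
    integral_scatterBound_speed hψ_int hψ_norm hf_sphere_sq hfT_ω
  have hG₁₂ : Integrable (fun ω => μhat * ((∫ v in Ioi (0:ℝ), (∫ ω', f (v, ω') ∂σ) ^ 2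
      / psiq σ ψ q v) * q ω) + μtil * ((∫ v in Ioi (0:ℝ), f (v, ω)) ^ 2 / q ω)) σ :=
    ((hq.const_mul _).const_mul _).add (hf_speed_sq.const_mul _)
  have hG₃ := hfT.integral_prod_right.const_mul (μhat + μtil)
  calc _ ≤ ∫ ω, (∫ v in Ioi (0:ℝ), scatterBound σ ψ q μhat μtil f v ω) ∂σ :=
        integral_prod_le_integral_integral_of_norm_le
          (ae_norm_sq_scatter_div_Tker_le hμhat hμtil hψ hq_pos hψq_pos f)
          (scatterBound_nonneg hμhat hμtil hψ hq_pos f) (hG.mono fun _ h => h.1)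
          (((hG₁₂.add hG₃).const_mul _).congr (hG.mono fun _ h => h.2.symm))
    _ = 3 * (μhat + μtil) * (μhat * (∫ v in Ioi (0:ℝ), (∫ ω, f (v, ω) ∂σ) ^ 2 / psiq σ ψ q v)
          + μtil * (∫ ω, (∫ v in Ioi (0:ℝ), f (v, ω)) ^ 2 / q ω ∂σ) + (μhat + μtil) * R) := by
        rw [integral_congr_ae (hG.mono fun _ h => h.2), integral_const_mul, integral_add hG₁₂ hG₃,
          integral_add ((hq.const_mul _).const_mul _) (hf_speed_sq.const_mul _),
          integral_const_mul, integral_const_mul, integral_const_mul, integral_const_mul, hq_norm,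
          mul_one, hR]
    _ ≤ 3 * (μhat + μtil) * (μhat * R + μtil * (psiqcSpeedMass σ ψ q μhat μtil * R)
          + (μhat + μtil) * R) := by gcongr
    _ = _ := by ring

end Main

theorem stmt_10_general {d : ℕ} (σ : Measure (Sd d)) [SFinite σ]
    (ψ : ℝ → Sd d → ℝ) (q : Sd d → ℝ) (μhat μtil : ℝ)
    (hμhat : 0 < μhat) (hμtil : 0 < μtil)
    (hψnn : ∀ v ω, 0 ≤ ψ v ω) (hqpos : ∀ ω, 0 < q ω)
    (hψint : ∀ ω, IntegrableOn (fun v => ψ v ω) (Ioi (0:ℝ)))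
    (hqint : Integrable q σ)
    (hψnorm : ∀ ω, ∫ v in Ioi (0:ℝ), ψ v ω = 1)
    (hqnorm : ∫ ω, q ω ∂σ = 1)
    (hψqpos : ∀ v ∈ Ioi (0:ℝ), 0 < psiq σ ψ q v)
    (hψqint : IntegrableOn (psiq σ ψ q) (Ioi (0:ℝ)))
    (hψqprod : ∀ v, Integrable (fun ω => ψ v ω * q ω) σ) :
    ∃ C : ℝ, 0 < C ∧
      ∀ f : ℝ × Sd d → ℝ,
        Integrable f (Vprod σ) →
        Integrable (fun p => (f p) ^ 2 / Tker σ ψ q μhat μtil p.1 p.2) (Vprod σ) →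
        (∀ ω, IntegrableOn (fun v => f (v, ω)) (Ioi (0:ℝ))) →
        (∀ v, Integrable (fun ω => f (v, ω)) σ) →
        Integrable (fun ω => (∫ v in Ioi (0:ℝ), f (v, ω)) ^ 2 / q ω) σ →
        IntegrableOn (fun v => (∫ ω, f (v, ω) ∂σ) ^ 2 / psiq σ ψ q v) (Ioi (0:ℝ)) →
        ∫ p, (μhat * ((∫ ω, f (p.1, ω) ∂σ) * q p.2 - f p)
              + μtil * ((∫ v in Ioi (0:ℝ), f (v, p.2)) * ψ p.1 p.2 - f p)) ^ 2
              / Tker σ ψ q μhat μtil p.1 p.2 ∂(Vprod σ)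
          ≤ C * ∫ p, (f p) ^ 2 / Tker σ ψ q μhat μtil p.1 p.2 ∂(Vprod σ) := by
  have hc₀ := psiqcSpeedMass_nonneg (σ := σ) hμhat hμtil hψnn fun ω => (hqpos ω).le
  refine ⟨3 * (μhat + μtil) * (2 * μhat + μtil + μtil * psiqcSpeedMass σ ψ q μhat μtil),
    by positivity, fun f _ hfT hf_speed hf_sphere hf_speed_sq hf_sphere_sq => ?_⟩
  exact integral_sq_scatter_div_Tker_le hμhat hμtil hψnn hqpos hψint hqint hψnorm hqnorm hψqpos
    hψqint hψqprod hfT hf_speed hf_sphere hf_speed_sq hf_sphere_sq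

/-- under the normalization assumptions on `ψ, q` and
`ψ_q^c/ψ_q ∈ L^∞` (bound `K`), the operator
`𝓛f = μ̂(ρf̃ q − f) + μ̃(ρf̂ ψ − f)` is bounded on `L²_T(𝒱)`: there is a finite
constant `C > 0` (depending only on `μ̂, μ̃, K`) with `‖𝓛f‖²_{L²_T} ≤ C ‖f‖²_{L²_T}`. -/
theorem stmt_10 {d : ℕ} (σ : Measure (Sd d)) [SFinite σ]
    (ψ : ℝ → Sd d → ℝ) (q : Sd d → ℝ) (μhat μtil K : ℝ)
    (hμhat : 0 < μhat) (hμtil : 0 < μtil)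
    (hψnn : ∀ v ω, 0 ≤ ψ v ω) (hqpos : ∀ ω, 0 < q ω)
    (hψint : ∀ ω, IntegrableOn (fun v => ψ v ω) (Ioi (0:ℝ)))
    (hqint : Integrable q σ)
    (hψnorm : ∀ ω, ∫ v in Ioi (0:ℝ), ψ v ω = 1)
    (hqnorm : ∫ ω, q ω ∂σ = 1)
    (hψqpos : ∀ v ∈ Ioi (0:ℝ), 0 < psiq σ ψ q v)
    (hψqcpos : ∀ v ∈ Ioi (0:ℝ), ∀ ω, 0 < psiqc σ ψ q μhat μtil v ω)
    (hψqint : IntegrableOn (psiq σ ψ q) (Ioi (0:ℝ)))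
    (hψqprod : ∀ v, Integrable (fun ω => ψ v ω * q ω) σ)
    (hK : ∀ v ∈ Ioi (0:ℝ), ∀ ω, psiqc σ ψ q μhat μtil v ω ≤ K * psiq σ ψ q v) :
    ∃ C : ℝ, 0 < C ∧
      ∀ f : ℝ × Sd d → ℝ,
        Integrable f (Vprod σ) →
        Integrable (fun p => (f p) ^ 2 / Tker σ ψ q μhat μtil p.1 p.2) (Vprod σ) →
        (∀ ω, IntegrableOn (fun v => f (v, ω)) (Ioi (0:ℝ))) →
        (∀ v, Integrable (fun ω => f (v, ω)) σ) →
        Integrable (fun ω => (∫ v in Ioi (0:ℝ), f (v, ω)) ^ 2 / q ω) σ →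
        IntegrableOn (fun v => (∫ ω, f (v, ω) ∂σ) ^ 2 / psiq σ ψ q v) (Ioi (0:ℝ)) →
        ∫ p, (μhat * ((∫ ω, f (p.1, ω) ∂σ) * q p.2 - f p)
              + μtil * ((∫ v in Ioi (0:ℝ), f (v, p.2)) * ψ p.1 p.2 - f p)) ^ 2
              / Tker σ ψ q μhat μtil p.1 p.2 ∂(Vprod σ)
          ≤ C * ∫ p, (f p) ^ 2 / Tker σ ψ q μhat μtil p.1 p.2 ∂(Vprod σ) :=
  stmt_10_general σ ψ q μhat μtil hμhat hμtil hψnn hqpos hψint hqint hψnorm hqnorm hψqpos hψqint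
    hψqprod


end
end

section
/- Suppose ψ = ψ(ṽ) does not depend on v̂ (so T = ψq). For the full operator 𝓛f = μ̂(ρf̃q − f) + μ̃(ρf̂ψ − f), the entropy dissipation decomposes as ⟨𝓛f, f⟩_T = 2𝓓_T(f) − 𝓓_{ψ}(ρf̃) − 𝓓_q(ρf̂), where 𝓓_T, 𝓓_ψ, 𝓓_q are the (nonpositive) symmetrized quadratic dissipation functionals with weights T, ψ, q respectively; moreover −𝓓_q(ρf̂) ≤ 𝓓_T(f) and −𝓓_ψ(ρf̃) ≤ 𝓓_T(f), hence ⟨𝓛f,f⟩_T ≤ 0. -/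
open MeasureTheory Set

noncomputable section

/-- Symmetrized quadratic entropy dissipation functional with weight `T = ψ ⊗ q`
on the phase space. -/
noncomputable def DissT {d : ℕ} (σ : Measure (Sd d)) (ψ : ℝ → ℝ) (q : Sd d → ℝ)
    (f : ℝ × Sd d → ℝ) : ℝ :=
  -(1 / 2) * ∫ p, (∫ p', (f p / (ψ p.1 * q p.2) - f p' / (ψ p'.1 * q p'.2)) ^ 2
      * (ψ p.1 * q p.2) * (ψ p'.1 * q p'.2) ∂(Vprod σ)) ∂(Vprod σ)

/-- Symmetrized quadratic entropy dissipation functional with weight `ψ` on `ℝ₊`. -/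
noncomputable def DissS (ψ : ℝ → ℝ) (g : ℝ → ℝ) : ℝ :=
  -(1 / 2) * ∫ v in Ioi (0:ℝ), (∫ v' in Ioi (0:ℝ),
      (g v / ψ v - g v' / ψ v') ^ 2 * ψ v * ψ v')

/-- Symmetrized quadratic entropy dissipation functional with weight `q` on `S^{d-1}`. -/
noncomputable def DissD {d : ℕ} (σ : Measure (Sd d)) (q : Sd d → ℝ) (g : Sd d → ℝ) : ℝ :=
  -(1 / 2) * ∫ ω, (∫ ω', (g ω / q ω - g ω' / q ω') ^ 2 * q ω * q ω' ∂σ) ∂σ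

lemma aux_sq_le {α : Type*} [MeasurableSpace α] (μ : Measure α) (M g : α → ℝ)
    (hM0 : ∀ᵐ a ∂μ, 0 < M a) (hMint : Integrable M μ) (hMnorm : ∫ a, M a ∂μ = 1)
    (hg : Integrable g μ) (hg2 : Integrable (fun a => g a ^ 2 / M a) μ) :
    (∫ a, g a ∂μ) ^ 2 ≤ ∫ a, g a ^ 2 / M a ∂μ := by
  set c := ∫ a, g a ∂μ with hc
  have key : 0 ≤ ∫ a, (g a / M a - c) ^ 2 * M a ∂μ := by
    apply integral_nonneg_of_ae
    filter_upwards [hM0] with a ha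
    positivity
  have hexp : ∀ᵐ a ∂μ, (g a / M a - c) ^ 2 * M a
      = g a ^ 2 / M a - 2 * c * g a + c ^ 2 * M a := by
    filter_upwards [hM0] with a ha
    field_simp
    ring
  have h1 : Integrable (fun a => g a ^ 2 / M a - 2 * c * g a) μ := hg2.sub (hg.const_mul _)
  have h2 : Integrable (fun a => c ^ 2 * M a) μ := hMint.const_mul _
  have h3 : Integrable (fun a => 2 * c * g a) μ := hg.const_mul _
  rw [integral_congr_ae hexp, integral_add h1 h2, integral_sub hg2 h3,
      integral_const_mul, integral_const_mul, hMnorm, ← hc] at key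
  nlinarith [key]

lemma aux_diss {α : Type*} [MeasurableSpace α] (μ : Measure α) (M g : α → ℝ)
    (hM0 : ∀ᵐ a ∂μ, 0 < M a) (hMint : Integrable M μ) (hMnorm : ∫ a, M a ∂μ = 1)
    (hg : Integrable g μ) (hg2 : Integrable (fun a => g a ^ 2 / M a) μ) :
    -(1/2 : ℝ) * ∫ a, (∫ b, (g a / M a - g b / M b) ^ 2 * M a * M b ∂μ) ∂μ
      = (∫ a, g a ∂μ) ^ 2 - ∫ a, g a ^ 2 / M a ∂μ := by
  set ρ := ∫ a, g a ∂μ with hρ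
  set H := ∫ a, g a ^ 2 / M a ∂μ with hH
  have hinner : ∀ᵐ a ∂μ, (∫ b, (g a / M a - g b / M b) ^ 2 * M a * M b ∂μ)
      = g a ^ 2 / M a - 2 * ρ * g a + H * M a := by
    filter_upwards [hM0] with a ha
    have hpt : ∀ᵐ b ∂μ, (g a / M a - g b / M b) ^ 2 * M a * M b
        = g a ^ 2 / M a * M b - 2 * g a * g b + M a * (g b ^ 2 / M b) := by
      filter_upwards [hM0] with b hb
      field_simp
      ring
    have h1 : Integrable (fun b => g a ^ 2 / M a * M b - 2 * g a * g b) μ :=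
      (hMint.const_mul _).sub (hg.const_mul _)
    have h2 : Integrable (fun b => M a * (g b ^ 2 / M b)) μ := hg2.const_mul _
    have h3 : Integrable (fun b => 2 * g a * g b) μ := hg.const_mul _
    rw [integral_congr_ae hpt, integral_add h1 h2,
        integral_sub (hMint.const_mul _) h3,
        integral_const_mul, integral_const_mul, integral_const_mul, hMnorm, ← hρ, ← hH]
    ring
  have h1 : Integrable (fun a => g a ^ 2 / M a - 2 * ρ * g a) μ := hg2.sub (hg.const_mul _)
  have h2 : Integrable (fun a => H * M a) μ := hMint.const_mul _
  have h3 : Integrable (fun a => 2 * ρ * g a) μ := hg.const_mul _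
  rw [integral_congr_ae hinner, integral_add h1 h2, integral_sub hg2 h3,
      integral_const_mul, integral_const_mul, hMnorm, ← hρ, ← hH]
  ring

/-- when `ψ` does not depend on the direction (`T = ψq`), the entropy
dissipation of `𝓛f = μ̂(ρf̃q − f) + μ̃(ρf̂ψ − f)` decomposes through the (nonpositive)
symmetrized dissipation functionals:
`⟨𝓛f,f⟩_T = μ̂(𝓓_T(f) − 𝓓_ψ(ρf̃)) + μ̃(𝓓_T(f) − 𝓓_q(ρf̂))`
(for `μ̂ = μ̃ = 1` this is `2𝓓_T − 𝓓_ψ − 𝓓_q`); moreover `𝓓_T(f) ≤ 𝓓_ψ(ρf̃)` and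
`𝓓_T(f) ≤ 𝓓_q(ρf̂)` (i.e. `−𝓓_ψ(ρf̃) ≤ −𝓓_T(f)`, `−𝓓_q(ρf̂) ≤ −𝓓_T(f)`, by Jensen),
hence `⟨𝓛f,f⟩_T ≤ 0`. -/
theorem stmt_14 {d : ℕ} (σ : Measure (Sd d)) [SFinite σ]
    (ψ : ℝ → ℝ) (q : Sd d → ℝ) (μhat μtil : ℝ)
    (hμhat : 0 < μhat) (hμtil : 0 < μtil)
    (hψpos : ∀ v ∈ Ioi (0:ℝ), 0 < ψ v) (hqpos : ∀ ω, 0 < q ω)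
    (hψint : IntegrableOn ψ (Ioi (0:ℝ))) (hqint : Integrable q σ)
    (hψnorm : ∫ v in Ioi (0:ℝ), ψ v = 1) (hqnorm : ∫ ω, q ω ∂σ = 1)
    (f : ℝ × Sd d → ℝ)
    (hf : Integrable f (Vprod σ))
    (hf2 : Integrable (fun p => (f p) ^ 2 / (ψ p.1 * q p.2)) (Vprod σ))
    (hs1 : ∀ ω, IntegrableOn (fun v => f (v, ω)) (Ioi (0:ℝ)))
    (hs2 : ∀ v, Integrable (fun ω => f (v, ω)) σ)
    (hmS2 : IntegrableOn (fun v => (∫ ω, f (v, ω) ∂σ) ^ 2 / ψ v) (Ioi (0:ℝ)))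
    (hmD2 : Integrable (fun ω => (∫ v in Ioi (0:ℝ), f (v, ω)) ^ 2 / q ω) σ)
    (hc1 : Integrable (fun p => (∫ ω, f (p.1, ω) ∂σ) * f p / ψ p.1) (Vprod σ))
    (hc2 : Integrable (fun p => (∫ v in Ioi (0:ℝ), f (v, p.2)) * f p / q p.2) (Vprod σ)) :
    (∫ p, (μhat * ((∫ ω, f (p.1, ω) ∂σ) * q p.2 - f p)
          + μtil * ((∫ v in Ioi (0:ℝ), f (v, p.2)) * ψ p.1 - f p)) * f p
          / (ψ p.1 * q p.2) ∂(Vprod σ))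
      = μhat * (DissT σ ψ q f - DissS ψ (fun v => ∫ ω, f (v, ω) ∂σ))
        + μtil * (DissT σ ψ q f - DissD σ q (fun ω => ∫ v in Ioi (0:ℝ), f (v, ω))) ∧
    DissT σ ψ q f ≤ DissS ψ (fun v => ∫ ω, f (v, ω) ∂σ) ∧
    DissT σ ψ q f ≤ DissD σ q (fun ω => ∫ v in Ioi (0:ℝ), f (v, ω)) ∧
    (∫ p, (μhat * ((∫ ω, f (p.1, ω) ∂σ) * q p.2 - f p)
          + μtil * ((∫ v in Ioi (0:ℝ), f (v, p.2)) * ψ p.1 - f p)) * f p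
          / (ψ p.1 * q p.2) ∂(Vprod σ)) ≤ 0 := by
  classical
  -- a.e. positivity of the weights
  have haeS : ∀ᵐ v ∂(volume.restrict (Ioi (0:ℝ))), 0 < ψ v :=
    (ae_restrict_mem measurableSet_Ioi).mono fun v hv => hψpos v hv
  have haeIoi : ∀ᵐ p ∂(Vprod σ), p.1 ∈ Ioi (0:ℝ) := by
    rw [ae_iff]
    have hset : (Vprod σ) ((Ioi (0:ℝ))ᶜ ×ˢ (univ : Set (Sd d))) = 0 := by
      rw [Vprod, Measure.prod_prod, Measure.restrict_apply measurableSet_Ioi.compl,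
        compl_inter_self, measure_empty, zero_mul]
    refine measure_mono_null ?_ hset
    intro p hp
    exact ⟨hp, trivial⟩
  have haeP : ∀ᵐ p ∂(Vprod σ), 0 < ψ p.1 * q p.2 :=
    haeIoi.mono fun p hp => mul_pos (hψpos _ hp) (hqpos _)
  -- weight integrability and normalization
  have hTint : Integrable (fun p : ℝ × Sd d => ψ p.1 * q p.2) (Vprod σ) :=
    hψint.mul_prod hqint
  have hTnorm : ∫ p, ψ p.1 * q p.2 ∂(Vprod σ) = 1 := by
    rw [Vprod, integral_prod_mul, hψnorm, hqnorm, one_mul]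
  -- marginals
  have hftint : Integrable (fun v => ∫ ω, f (v, ω) ∂σ) (volume.restrict (Ioi (0:ℝ))) :=
    hf.integral_prod_left
  have hfhint : Integrable (fun ω => ∫ v in Ioi (0:ℝ), f (v, ω)) σ :=
    hf.integral_prod_right
  set ρ : ℝ := ∫ p, f p ∂(Vprod σ) with hρdef
  have hρ1 : ∫ v in Ioi (0:ℝ), (∫ ω, f (v, ω) ∂σ) = ρ := (integral_prod f hf).symm
  have hρ2 : ∫ ω, (∫ v in Ioi (0:ℝ), f (v, ω)) ∂σ = ρ := (integral_prod_symm f hf).symm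
  set I : ℝ := ∫ p, f p ^ 2 / (ψ p.1 * q p.2) ∂(Vprod σ) with hIdef
  set A : ℝ := ∫ v in Ioi (0:ℝ), (∫ ω, f (v, ω) ∂σ) ^ 2 / ψ v with hAdef
  set B : ℝ := ∫ ω, (∫ v in Ioi (0:ℝ), f (v, ω)) ^ 2 / q ω ∂σ with hBdef
  -- Diss formulas
  have hDT : DissT σ ψ q f = ρ ^ 2 - I :=
    aux_diss (Vprod σ) (fun p => ψ p.1 * q p.2) f haeP hTint hTnorm hf hf2
  have hDS : DissS ψ (fun v => ∫ ω, f (v, ω) ∂σ) = ρ ^ 2 - A := by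
    have h := aux_diss (volume.restrict (Ioi (0:ℝ))) ψ
      (fun v => ∫ ω, f (v, ω) ∂σ) haeS hψint hψnorm hftint hmS2
    rw [hρ1, ← hAdef] at h
    exact h
  have hDD : DissD σ q (fun ω => ∫ v in Ioi (0:ℝ), f (v, ω)) = ρ ^ 2 - B := by
    have h := aux_diss σ q (fun ω => ∫ v in Ioi (0:ℝ), f (v, ω))
      (ae_of_all _ hqpos) hqint hqnorm hfhint hmD2
    rw [hρ2, ← hBdef] at h
    exact h
  -- Jensen : A ≤ I
  have hAI : A ≤ I := by
    have hI1 : I = ∫ v in Ioi (0:ℝ), (∫ ω, f (v, ω) ^ 2 / (ψ v * q ω) ∂σ) :=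
      integral_prod _ hf2
    have hsl : ∀ᵐ v ∂(volume.restrict (Ioi (0:ℝ))),
        Integrable (fun ω => f (v, ω) ^ 2 / (ψ v * q ω)) σ := hf2.prod_right_ae
    have hptw : ∀ᵐ v ∂(volume.restrict (Ioi (0:ℝ))),
        (∫ ω, f (v, ω) ∂σ) ^ 2 / ψ v ≤ ∫ ω, f (v, ω) ^ 2 / (ψ v * q ω) ∂σ := by
      filter_upwards [hsl, haeS] with v hv hψv
      have hq2 : Integrable (fun ω => f (v, ω) ^ 2 / q ω) σ := by
        refine (hv.const_mul (ψ v)).congr (ae_of_all _ fun ω => ?_)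
        show ψ v * (f (v, ω) ^ 2 / (ψ v * q ω)) = f (v, ω) ^ 2 / q ω
        rw [mul_div_assoc', mul_div_mul_left _ _ hψv.ne']
      have hJ : (∫ ω, f (v, ω) ∂σ) ^ 2 ≤ ∫ ω, f (v, ω) ^ 2 / q ω ∂σ :=
        aux_sq_le σ q (fun ω => f (v, ω)) (ae_of_all _ hqpos) hqint hqnorm (hs2 v) hq2
      calc (∫ ω, f (v, ω) ∂σ) ^ 2 / ψ v = (ψ v)⁻¹ * (∫ ω, f (v, ω) ∂σ) ^ 2 := by ring
        _ ≤ (ψ v)⁻¹ * ∫ ω, f (v, ω) ^ 2 / q ω ∂σ :=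
            mul_le_mul_of_nonneg_left hJ (inv_nonneg.2 hψv.le)
        _ = ∫ ω, f (v, ω) ^ 2 / (ψ v * q ω) ∂σ := by
            rw [← integral_const_mul]
            congr 1; funext ω; ring
    have hinnerInt : Integrable (fun v => ∫ ω, f (v, ω) ^ 2 / (ψ v * q ω) ∂σ)
        (volume.restrict (Ioi (0:ℝ))) := hf2.integral_prod_left
    calc A ≤ ∫ v in Ioi (0:ℝ), (∫ ω, f (v, ω) ^ 2 / (ψ v * q ω) ∂σ) :=
          integral_mono_ae hmS2 hinnerInt hptw
      _ = I := hI1.symm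
  -- Jensen : B ≤ I
  have hBI : B ≤ I := by
    have hI2 : I = ∫ ω, (∫ v in Ioi (0:ℝ), f (v, ω) ^ 2 / (ψ v * q ω)) ∂σ :=
      integral_prod_symm _ hf2
    have hsl : ∀ᵐ ω ∂σ, Integrable (fun v => f (v, ω) ^ 2 / (ψ v * q ω))
        (volume.restrict (Ioi (0:ℝ))) := hf2.prod_left_ae
    have hptw : ∀ᵐ ω ∂σ, (∫ v in Ioi (0:ℝ), f (v, ω)) ^ 2 / q ω
        ≤ ∫ v in Ioi (0:ℝ), f (v, ω) ^ 2 / (ψ v * q ω) := by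
      filter_upwards [hsl] with ω hω
      have hq2 : Integrable (fun v => f (v, ω) ^ 2 / ψ v) (volume.restrict (Ioi (0:ℝ))) := by
        refine (hω.const_mul (q ω)).congr (ae_of_all _ fun v => ?_)
        show q ω * (f (v, ω) ^ 2 / (ψ v * q ω)) = f (v, ω) ^ 2 / ψ v
        rw [mul_comm (ψ v) (q ω), mul_div_assoc', mul_div_mul_left _ _ (hqpos ω).ne']
      have hJ : (∫ v in Ioi (0:ℝ), f (v, ω)) ^ 2 ≤ ∫ v in Ioi (0:ℝ), f (v, ω) ^ 2 / ψ v :=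
        aux_sq_le _ ψ (fun v => f (v, ω)) haeS hψint hψnorm (hs1 ω) hq2
      calc (∫ v in Ioi (0:ℝ), f (v, ω)) ^ 2 / q ω
            = (q ω)⁻¹ * (∫ v in Ioi (0:ℝ), f (v, ω)) ^ 2 := by ring
        _ ≤ (q ω)⁻¹ * ∫ v in Ioi (0:ℝ), f (v, ω) ^ 2 / ψ v :=
            mul_le_mul_of_nonneg_left hJ (inv_nonneg.2 (hqpos ω).le)
        _ = ∫ v in Ioi (0:ℝ), f (v, ω) ^ 2 / (ψ v * q ω) := by
            rw [← integral_const_mul]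
            congr 1; funext v; ring
    have hinnerInt : Integrable (fun ω => ∫ v in Ioi (0:ℝ), f (v, ω) ^ 2 / (ψ v * q ω)) σ :=
      hf2.integral_prod_right
    calc B ≤ ∫ ω, (∫ v in Ioi (0:ℝ), f (v, ω) ^ 2 / (ψ v * q ω)) ∂σ :=
          integral_mono_ae hmD2 hinnerInt hptw
      _ = I := hI2.symm
  -- the cross integrals
  have hC1 : ∫ p, (∫ ω, f (p.1, ω) ∂σ) * f p / ψ p.1 ∂(Vprod σ) = A := by
    have inner1 : ∀ v : ℝ, (∫ ω, (∫ ω', f (v, ω') ∂σ) * f (v, ω) / ψ v ∂σ)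
        = (∫ ω, f (v, ω) ∂σ) ^ 2 / ψ v := by
      intro v
      rw [show (fun ω => (∫ ω', f (v, ω') ∂σ) * f (v, ω) / ψ v)
          = (fun ω => ((∫ ω', f (v, ω') ∂σ) / ψ v) * f (v, ω)) from
          funext fun ω => by ring]
      rw [integral_const_mul]
      ring
    rw [Vprod, integral_prod _ hc1, hAdef]
    congr 1
    funext v
    exact inner1 v
  have hC2 : ∫ p, (∫ v in Ioi (0:ℝ), f (v, p.2)) * f p / q p.2 ∂(Vprod σ) = B := by
    have inner2 : ∀ ω : Sd d, (∫ v in Ioi (0:ℝ), (∫ v' in Ioi (0:ℝ), f (v', ω)) * f (v, ω) / q ω)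
        = (∫ v in Ioi (0:ℝ), f (v, ω)) ^ 2 / q ω := by
      intro ω
      rw [show (fun v => (∫ v' in Ioi (0:ℝ), f (v', ω)) * f (v, ω) / q ω)
          = (fun v => ((∫ v' in Ioi (0:ℝ), f (v', ω)) / q ω) * f (v, ω)) from
          funext fun v => by ring]
      rw [integral_const_mul]
      ring
    rw [Vprod, integral_prod_symm _ hc2, hBdef]
    congr 1
    funext ω
    exact inner2 ω
  -- the main computation
  have hmain : (∫ p, (μhat * ((∫ ω, f (p.1, ω) ∂σ) * q p.2 - f p)
          + μtil * ((∫ v in Ioi (0:ℝ), f (v, p.2)) * ψ p.1 - f p)) * f p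
          / (ψ p.1 * q p.2) ∂(Vprod σ)) = μhat * (A - I) + μtil * (B - I) := by
    have heq : ∀ᵐ p ∂(Vprod σ), (μhat * ((∫ ω, f (p.1, ω) ∂σ) * q p.2 - f p)
          + μtil * ((∫ v in Ioi (0:ℝ), f (v, p.2)) * ψ p.1 - f p)) * f p
          / (ψ p.1 * q p.2)
        = μhat * ((∫ ω, f (p.1, ω) ∂σ) * f p / ψ p.1 - f p ^ 2 / (ψ p.1 * q p.2))
          + μtil * ((∫ v in Ioi (0:ℝ), f (v, p.2)) * f p / q p.2
              - f p ^ 2 / (ψ p.1 * q p.2)) := by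
      filter_upwards [haeIoi] with p hp
      have h1 : ψ p.1 ≠ 0 := (hψpos _ hp).ne'
      have h2 : q p.2 ≠ 0 := (hqpos _).ne'
      field_simp
    have i1 : Integrable (fun p => (∫ ω, f (p.1, ω) ∂σ) * f p / ψ p.1
        - f p ^ 2 / (ψ p.1 * q p.2)) (Vprod σ) := hc1.sub hf2
    have i2 : Integrable (fun p => (∫ v in Ioi (0:ℝ), f (v, p.2)) * f p / q p.2
        - f p ^ 2 / (ψ p.1 * q p.2)) (Vprod σ) := hc2.sub hf2
    rw [integral_congr_ae heq, integral_add (i1.const_mul _) (i2.const_mul _),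
        integral_const_mul, integral_const_mul, integral_sub hc1 hf2,
        integral_sub hc2 hf2, hC1, hC2, ← hIdef]
  refine ⟨?_, ?_, ?_, ?_⟩
  · rw [hmain, hDT, hDS, hDD]; ring
  · rw [hDT, hDS]; linarith
  · rw [hDT, hDD]; linarith
  · rw [hmain]
    nlinarith [mul_le_mul_of_nonneg_left hAI hμhat.le,
      mul_le_mul_of_nonneg_left hBI hμtil.le]


end
end
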